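/- arXiv:1711.00495 — 4 statements merged into one kernel-verified Lean document; each statement's English description precedes it below -/
import Mathlib

section
/- Let A, B be n×n Hermitian matrices. Then the number of positive eigenvalues of the regular pencil A - zB (counted with algebraic multiplicity) satisfies n₊(A,B) ≥ n₊(A) + n₊(B) − n. -/
open Polynomial Matrix
open scoped ComplexOrder

noncomputable def pencil {n : ℕ} (A B : Matrix (Fin n) (Fin n) ℂ) : Polynomial ℂ :=
  (A.map (fun a => Polynomial.C a) - (Polynomial.X : Polynomial ℂ) • B.map (fun a => Polynomial.C a)).det

noncomputable def nPos {n : ℕ} {A : Matrix (Fin n) (Fin n) ℂ} (hA : A.IsHermitian) : ℕ :=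
  (Finset.univ.filter fun i => 0 < hA.eigenvalues i).card

noncomputable def nZero {n : ℕ} {A : Matrix (Fin n) (Fin n) ℂ} (hA : A.IsHermitian) : ℕ :=
  (Finset.univ.filter fun i => hA.eigenvalues i = 0).card

noncomputable def nNeg {n : ℕ} {A : Matrix (Fin n) (Fin n) ℂ} (hA : A.IsHermitian) : ℕ :=
  (Finset.univ.filter fun i => hA.eigenvalues i < 0).card

noncomputable def pencilPosCount {n : ℕ} (A B : Matrix (Fin n) (Fin n) ℂ) : ℕ :=
  ((pencil A B).roots.filter fun z => z.im = 0 ∧ 0 < z.re).card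

noncomputable def pencilNegCount {n : ℕ} (A B : Matrix (Fin n) (Fin n) ℂ) : ℕ :=
  ((pencil A B).roots.filter fun z => z.im = 0 ∧ z.re < 0).card

noncomputable def pencilRealCount {n : ℕ} (A B : Matrix (Fin n) (Fin n) ℂ) : ℕ :=
  ((pencil A B).roots.filter fun z => z.im = 0).card

noncomputable def pencilComplexCount {n : ℕ} (A B : Matrix (Fin n) (Fin n) ℂ) : ℕ :=
  ((pencil A B).roots.filter fun z => z.im ≠ 0).card

section aux
variable {n : ℕ}

noncomputable def qf (M : Matrix (Fin n) (Fin n) ℂ) (x : Fin n → ℂ) : ℝ :=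
  (star x ⬝ᵥ M *ᵥ x).re

def PdOn (M : Matrix (Fin n) (Fin n) ℂ) (W : Submodule ℂ (Fin n → ℂ)) : Prop :=
  ∀ x ∈ W, x ≠ 0 → 0 < qf M x

def NdOn (M : Matrix (Fin n) (Fin n) ℂ) (W : Submodule ℂ (Fin n → ℂ)) : Prop :=
  ∀ x ∈ W, x ≠ 0 → qf M x < 0

lemma qf_eq_sum {M : Matrix (Fin n) (Fin n) ℂ} (hM : M.IsHermitian) (x : Fin n → ℂ) :
    qf M x = ∑ j, hM.eigenvalues j *
      Complex.normSq ((star (hM.eigenvectorUnitary : Matrix (Fin n) (Fin n) ℂ) *ᵥ x) j) := by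
  set U : Matrix (Fin n) (Fin n) ℂ := (hM.eigenvectorUnitary : Matrix (Fin n) (Fin n) ℂ) with hU
  set y := star U *ᵥ x with hy
  have h2 : ∀ w, star x ⬝ᵥ (U *ᵥ w) = star y ⬝ᵥ w := by
    intro w
    rw [hy, Matrix.star_mulVec, Matrix.dotProduct_mulVec, Matrix.star_eq_conjTranspose,
      Matrix.conjTranspose_conjTranspose]
  have h1 : M *ᵥ x = U *ᵥ (diagonal (RCLike.ofReal ∘ hM.eigenvalues) *ᵥ y) := by
    rw [hy, mulVec_mulVec, mulVec_mulVec]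
    conv_lhs => rw [hM.spectral_theorem]
    rfl
  rw [qf, h1, h2, dotProduct, Complex.re_sum]
  congr 1; ext j
  rw [Matrix.mulVec_diagonal]
  simp only [Pi.star_apply, Function.comp_apply, RCLike.ofReal_real_eq_id, id_eq]
  rw [show (RCLike.ofReal (hM.eigenvalues j) : ℂ) = ((hM.eigenvalues j : ℝ) : ℂ) from rfl]
  have : star (y j) * (((hM.eigenvalues j : ℝ) : ℂ) * y j)
      = ((hM.eigenvalues j : ℝ) : ℂ) * ((Complex.normSq (y j) : ℝ) : ℂ) := by
    rw [show star (y j) = (starRingEnd ℂ) (y j) from rfl, ← Complex.mul_conj]; ring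
  rw [this, ← Complex.ofReal_mul, Complex.ofReal_re]
section aux2
open Finset
variable {n : ℕ} {M : Matrix (Fin n) (Fin n) ℂ}

noncomputable def spanS (hM : M.IsHermitian) (S : Finset (Fin n)) : Submodule ℂ (Fin n → ℂ) :=
  Submodule.span ℂ (Set.range fun i : S => ⇑(hM.eigenvectorBasis i))

lemma star_unitary_mul_self (hM : M.IsHermitian) :
    star (hM.eigenvectorUnitary : Matrix (Fin n) (Fin n) ℂ) * (hM.eigenvectorUnitary : Matrix (Fin n) (Fin n) ℂ) = 1 :=
  Matrix.mem_unitaryGroup_iff'.mp hM.eigenvectorUnitary.2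

lemma unitary_mul_self_star (hM : M.IsHermitian) :
    (hM.eigenvectorUnitary : Matrix (Fin n) (Fin n) ℂ) * star (hM.eigenvectorUnitary : Matrix (Fin n) (Fin n) ℂ) = 1 :=
  Matrix.mem_unitaryGroup_iff.mp hM.eigenvectorUnitary.2

lemma yvec_ne_zero (hM : M.IsHermitian) {x : Fin n → ℂ} (hx : x ≠ 0) :
    star (hM.eigenvectorUnitary : Matrix (Fin n) (Fin n) ℂ) *ᵥ x ≠ 0 := by
  intro h
  apply hx
  have : ((hM.eigenvectorUnitary : Matrix (Fin n) (Fin n) ℂ) * star (hM.eigenvectorUnitary : Matrix (Fin n) (Fin n) ℂ)) *ᵥ x = 0 := by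
    rw [← Matrix.mulVec_mulVec, h, Matrix.mulVec_zero]
  rwa [unitary_mul_self_star, Matrix.one_mulVec] at this

lemma mulVec_sum' (N : Matrix (Fin n) (Fin n) ℂ) {ι : Type*} (s : Finset ι) (f : ι → (Fin n → ℂ)) :
    N *ᵥ (∑ i ∈ s, f i) = ∑ i ∈ s, N *ᵥ f i :=
  map_sum N.mulVecLin f s

lemma spanS_apply_eq_zero (hM : M.IsHermitian) {S : Finset (Fin n)} {x : Fin n → ℂ}
    (hx : x ∈ spanS hM S) {j : Fin n} (hj : j ∉ S) :
    (star (hM.eigenvectorUnitary : Matrix (Fin n) (Fin n) ℂ) *ᵥ x) j = 0 := by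
  obtain ⟨c, hc⟩ := (Submodule.mem_span_range_iff_exists_fun ℂ).mp hx
  have hstep : star (hM.eigenvectorUnitary : Matrix (Fin n) (Fin n) ℂ) *ᵥ x
      = ∑ i : S, c i • (Pi.single (i : Fin n) (1 : ℂ) : Fin n → ℂ) := by
    rw [← hc, mulVec_sum']
    refine Finset.sum_congr rfl fun i _ => ?_
    rw [Matrix.mulVec_smul]
    congr 1
    exact hM.star_eigenvectorUnitary_mulVec i
  rw [hstep]
  simp only [Finset.sum_apply, Pi.smul_apply]
  apply Finset.sum_eq_zero
  intro i _
  have : (i : Fin n) ≠ j := fun h => hj (h ▸ i.2)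
  simp [Pi.single_eq_of_ne' this]

lemma finrank_spanS (hM : M.IsHermitian) (S : Finset (Fin n)) :
    Module.finrank ℂ (spanS hM S) = S.card := by
  have hli : LinearIndependent ℂ (fun i : S => ⇑(hM.eigenvectorBasis i)) := by
    have h0 : LinearIndependent ℂ (fun i : Fin n => ⇑(hM.eigenvectorBasis i)) := by
      have := hM.eigenvectorBasis.toBasis.linearIndependent
      exact this.map' (WithLp.linearEquiv 2 ℂ (Fin n → ℂ)).toLinearMap (LinearEquiv.ker _)
    exact h0.comp _ Subtype.val_injective
  rw [spanS, finrank_span_eq_card hli, Fintype.card_coe]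

lemma qf_nonpos_on_spanS (hM : M.IsHermitian) {S : Finset (Fin n)}
    (hS : ∀ i ∈ S, hM.eigenvalues i ≤ 0) {x : Fin n → ℂ} (hx : x ∈ spanS hM S) :
    qf M x ≤ 0 := by
  rw [qf_eq_sum hM]
  apply Finset.sum_nonpos
  intro j _
  by_cases hj : j ∈ S
  · exact mul_nonpos_of_nonpos_of_nonneg (hS j hj) (Complex.normSq_nonneg _)
  · rw [spanS_apply_eq_zero hM hx hj]; simp

lemma qf_nonneg_on_spanS (hM : M.IsHermitian) {S : Finset (Fin n)}
    (hS : ∀ i ∈ S, 0 ≤ hM.eigenvalues i) {x : Fin n → ℂ} (hx : x ∈ spanS hM S) :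
    0 ≤ qf M x := by
  rw [qf_eq_sum hM]
  apply Finset.sum_nonneg
  intro j _
  by_cases hj : j ∈ S
  · exact mul_nonneg (hS j hj) (Complex.normSq_nonneg _)
  · rw [spanS_apply_eq_zero hM hx hj]; simp

lemma pdOn_spanS (hM : M.IsHermitian) {S : Finset (Fin n)}
    (hS : ∀ i ∈ S, 0 < hM.eigenvalues i) : PdOn M (spanS hM S) := by
  intro x hx hx0
  rw [qf_eq_sum hM]
  obtain ⟨j, hj'⟩ := Function.ne_iff.mp (yvec_ne_zero hM hx0)
  have hj : (star (hM.eigenvectorUnitary : Matrix (Fin n) (Fin n) ℂ) *ᵥ x) j ≠ 0 := by simpa using hj'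
  have hjS : j ∈ S := by
    by_contra hjS
    exact hj (by simpa using spanS_apply_eq_zero hM hx hjS)
  apply Finset.sum_pos'
  · intro i _
    by_cases hi : i ∈ S
    · exact mul_nonneg (hS i hi).le (Complex.normSq_nonneg _)
    · rw [spanS_apply_eq_zero hM hx hi]; simp
  · exact ⟨j, Finset.mem_univ j, mul_pos (hS j hjS) (Complex.normSq_pos.mpr hj)⟩

lemma ndOn_spanS (hM : M.IsHermitian) {S : Finset (Fin n)}
    (hS : ∀ i ∈ S, hM.eigenvalues i < 0) : NdOn M (spanS hM S) := by
  intro x hx hx0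
  rw [qf_eq_sum hM]
  obtain ⟨j, hj'⟩ := Function.ne_iff.mp (yvec_ne_zero hM hx0)
  have hj : (star (hM.eigenvectorUnitary : Matrix (Fin n) (Fin n) ℂ) *ᵥ x) j ≠ 0 := by simpa using hj'
  have hjS : j ∈ S := by
    by_contra hjS
    exact hj (by simpa using spanS_apply_eq_zero hM hx hjS)
  have h := Finset.sum_lt_sum (s := Finset.univ)
    (f := fun i => hM.eigenvalues i * Complex.normSq ((star (hM.eigenvectorUnitary : Matrix (Fin n) (Fin n) ℂ) *ᵥ x) i))
    (g := fun _ => (0:ℝ)) ?_ ?_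
  · simpa using h
  · intro i _
    by_cases hi : i ∈ S
    · exact mul_nonpos_of_nonpos_of_nonneg (hS i hi).le (Complex.normSq_nonneg _)
    · rw [spanS_apply_eq_zero hM hx hi]; simp
  · exact ⟨j, Finset.mem_univ j, mul_neg_of_neg_of_pos (hS j hjS) (Complex.normSq_pos.mpr hj)⟩

end aux2
section aux3
variable {n : ℕ} {M : Matrix (Fin n) (Fin n) ℂ}

lemma exists_pd_subspace (hM : M.IsHermitian) :
    ∃ W : Submodule ℂ (Fin n → ℂ), Module.finrank ℂ W = nPos hM ∧ PdOn M W :=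
  ⟨spanS hM (Finset.univ.filter fun i => 0 < hM.eigenvalues i),
    by rw [finrank_spanS, nPos], pdOn_spanS hM (fun i hi => (Finset.mem_filter.mp hi).2)⟩

lemma exists_nd_subspace (hM : M.IsHermitian) :
    ∃ W : Submodule ℂ (Fin n → ℂ), Module.finrank ℂ W = nNeg hM ∧ NdOn M W :=
  ⟨spanS hM (Finset.univ.filter fun i => hM.eigenvalues i < 0),
    by rw [finrank_spanS, nNeg], ndOn_spanS hM (fun i hi => (Finset.mem_filter.mp hi).2)⟩

lemma finrank_le_nPos (hM : M.IsHermitian) {W : Submodule ℂ (Fin n → ℂ)} (hW : PdOn M W) :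
    Module.finrank ℂ W ≤ nPos hM := by
  classical
  set S := Finset.univ.filter (fun i => ¬ 0 < hM.eigenvalues i) with hSdef
  set V := spanS hM S with hVdef
  have hVq : ∀ x ∈ V, qf M x ≤ 0 := fun x hx =>
    qf_nonpos_on_spanS hM (fun i hi => not_lt.mp (Finset.mem_filter.mp hi).2) hx
  have hinf : W ⊓ V = ⊥ := by
    rw [Submodule.eq_bot_iff]
    intro x hx
    by_contra hx0
    exact absurd (hVq x hx.2) (not_le.mpr (hW x hx.1 hx0))
  have h1 := Submodule.finrank_sup_add_finrank_inf_eq W V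
  rw [hinf, finrank_bot] at h1
  have h2 : Module.finrank ℂ ↥(W ⊔ V) ≤ n := by
    refine le_trans (Submodule.finrank_le _) ?_
    simp [Module.finrank_fintype_fun_eq_card]
  have h3 : Module.finrank ℂ V = S.card := finrank_spanS hM S
  have h4 : nPos hM + S.card = n := by
    rw [nPos, hSdef]
    simpa using Finset.card_filter_add_card_filter_not
      (s := Finset.univ) (p := fun i => 0 < hM.eigenvalues i)
  omega

lemma finrank_le_nNeg (hM : M.IsHermitian) {W : Submodule ℂ (Fin n → ℂ)} (hW : NdOn M W) :
    Module.finrank ℂ W ≤ nNeg hM := by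
  classical
  set S := Finset.univ.filter (fun i => ¬ hM.eigenvalues i < 0) with hSdef
  set V := spanS hM S with hVdef
  have hVq : ∀ x ∈ V, 0 ≤ qf M x := fun x hx =>
    qf_nonneg_on_spanS hM (fun i hi => not_lt.mp (Finset.mem_filter.mp hi).2) hx
  have hinf : W ⊓ V = ⊥ := by
    rw [Submodule.eq_bot_iff]
    intro x hx
    by_contra hx0
    exact absurd (hVq x hx.2) (not_le.mpr (hW x hx.1 hx0))
  have h1 := Submodule.finrank_sup_add_finrank_inf_eq W V
  rw [hinf, finrank_bot] at h1
  have h2 : Module.finrank ℂ ↥(W ⊔ V) ≤ n := by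
    refine le_trans (Submodule.finrank_le _) ?_
    simp [Module.finrank_fintype_fun_eq_card]
  have h3 : Module.finrank ℂ V = S.card := finrank_spanS hM S
  have h4 : nNeg hM + S.card = n := by
    rw [nNeg, hSdef]
    simpa using Finset.card_filter_add_card_filter_not
      (s := Finset.univ) (p := fun i => hM.eigenvalues i < 0)
  omega

lemma nPos_add_nNeg_add_nZero (hM : M.IsHermitian) : nPos hM + nNeg hM + nZero hM = n := by
  classical
  rw [nPos, nNeg, nZero]
  have h1 := Finset.card_filter_add_card_filter_not
    (s := Finset.univ) (p := fun i => 0 < hM.eigenvalues i)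
  have h2 : (Finset.univ.filter fun i => ¬ 0 < hM.eigenvalues i).card
      = (Finset.univ.filter fun i => hM.eigenvalues i < 0).card
        + (Finset.univ.filter fun i => hM.eigenvalues i = 0).card := by
    rw [← Finset.card_union_of_disjoint]
    · congr 1
      ext i
      simp only [Finset.mem_filter, Finset.mem_union, Finset.mem_univ, true_and]
      constructor
      · intro h; rcases lt_trichotomy (hM.eigenvalues i) 0 with h'|h'|h'
        · exact Or.inl h'
        · exact Or.inr h'
        · exact absurd h' h
      · rintro (h|h)
        · exact not_lt.mpr h.le
        · exact not_lt.mpr h.le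
    · rw [Finset.disjoint_filter]
      intro i _ h
      exact fun h' => absurd h' (ne_of_lt h)
  simp only [Fintype.card_fin, Finset.card_univ] at h1
  omega

lemma nZero_add_rank (hM : M.IsHermitian) : nZero hM + M.rank = n := by
  classical
  have h := hM.rank_eq_card_non_zero_eigs
  rw [h, Fintype.card_subtype]
  rw [nZero]
  have h1 := Finset.card_filter_add_card_filter_not
    (s := Finset.univ) (p := fun i => hM.eigenvalues i = 0)
  simp only [Finset.card_univ] at h1
  have h2 : (Finset.univ.filter fun i => ¬ hM.eigenvalues i = 0).card
      = (Finset.univ.filter fun i => hM.eigenvalues i ≠ 0).card := rfl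
  simp only [Fintype.card_fin, Finset.card_univ] at h1
  omega

lemma nPos_add_nNeg_of_det (hM : M.IsHermitian) (h : M.det ≠ 0) :
    nPos hM + nNeg hM = n := by
  have h0 : nZero hM = 0 := by
    rw [nZero, Finset.card_eq_zero, Finset.filter_eq_empty_iff]
    intro i _
    intro hzero
    apply h
    rw [hM.det_eq_prod_eigenvalues]
    exact Finset.prod_eq_zero (Finset.mem_univ i) (by rw [hzero]; norm_num)
  have := nPos_add_nNeg_add_nZero hM
  omega
end aux3
section aux4
variable {n : ℕ}

lemma qf_zero (M : Matrix (Fin n) (Fin n) ℂ) : qf M 0 = 0 := by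
  simp [qf]

lemma qf_smul (M : Matrix (Fin n) (Fin n) ℂ) (c : ℝ) (x : Fin n → ℂ) :
    qf M ((c:ℂ) • x) = c^2 * qf M x := by
  rw [qf, qf]
  have : star ((c:ℂ) • x) ⬝ᵥ M *ᵥ ((c:ℂ) • x) = (((c^2 : ℝ) : ℂ)) * (star x ⬝ᵥ M *ᵥ x) := by
    rw [Matrix.mulVec_smul, star_smul, smul_dotProduct, dotProduct_smul]
    rw [smul_smul, smul_eq_mul]
    congr 1
    rw [Complex.star_def, Complex.conj_ofReal]
    push_cast
    ring
  rw [this, Complex.re_ofReal_mul]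

lemma qf_continuous (M : Matrix (Fin n) (Fin n) ℂ) : Continuous (qf M) := by
  have hrw : qf M = fun x : Fin n → ℂ => (∑ i, star (x i) * ∑ j, M i j * x j).re := by
    funext x; rw [qf]
    congr 1
  rw [hrw]
  apply Complex.continuous_re.comp
  apply continuous_finset_sum
  intro i _
  exact ((continuous_apply i).star).mul
    (continuous_finset_sum _ fun j _ => continuous_const.mul (continuous_apply j))

lemma exists_lb {M : Matrix (Fin n) (Fin n) ℂ} {W : Submodule ℂ (Fin n → ℂ)} (hW : PdOn M W) :
    ∃ δ > 0, ∀ x ∈ W, δ * ‖x‖^2 ≤ qf M x := by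
  by_cases hbot : W = ⊥
  · refine ⟨1, one_pos, fun x hx => ?_⟩
    rw [hbot, Submodule.mem_bot] at hx
    simp [hx, qf_zero]
  · set K : Set (Fin n → ℂ) := (W : Set (Fin n → ℂ)) ∩ Metric.sphere 0 1 with hK
    have hcomp : IsCompact K := ((isCompact_sphere (0 : Fin n → ℂ) 1).inter_left
      (Submodule.closed_of_finiteDimensional W))
    have hne : K.Nonempty := by
      obtain ⟨x, hxW, hx0⟩ := Submodule.exists_mem_ne_zero_of_ne_bot hbot
      refine ⟨((‖x‖:ℂ))⁻¹ • x, ⟨Submodule.smul_mem _ _ hxW, ?_⟩⟩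
      simp only [Metric.mem_sphere, dist_zero_right, norm_smul]
      rw [norm_inv, Complex.norm_real, norm_norm]
      field_simp [norm_ne_zero_iff.mpr hx0]
    obtain ⟨x₀, hx₀K, hmin⟩ := hcomp.exists_isMinOn hne (qf_continuous M).continuousOn
    have hx₀W : x₀ ∈ W := hx₀K.1
    have hx₀n : ‖x₀‖ = 1 := by simpa using hx₀K.2
    have hx₀0 : x₀ ≠ 0 := by intro h; rw [h] at hx₀n; simp at hx₀n
    refine ⟨qf M x₀, hW x₀ hx₀W hx₀0, fun x hx => ?_⟩
    by_cases hx0 : x = 0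
    · simp [hx0, qf_zero]
    · have hnx : (0:ℝ) < ‖x‖ := norm_pos_iff.mpr hx0
      set u : Fin n → ℂ := ((‖x‖⁻¹ : ℝ):ℂ) • x with hu
      have huW : u ∈ W := Submodule.smul_mem _ _ hx
      have hun : u ∈ K := by
        refine ⟨huW, ?_⟩
        simp only [Metric.mem_sphere, dist_zero_right, hu, norm_smul]
        rw [Complex.norm_real, Real.norm_eq_abs, abs_of_pos (inv_pos.mpr hnx)]
        field_simp
      have h1 : qf M x₀ ≤ qf M u := hmin hun
      have h2 : qf M u = (‖x‖⁻¹)^2 * qf M x := qf_smul M _ x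
      rw [h2] at h1
      have h3 : qf M x₀ * ‖x‖^2 ≤ (‖x‖⁻¹)^2 * qf M x * ‖x‖^2 :=
        mul_le_mul_of_nonneg_right h1 (by positivity)
      calc qf M x₀ * ‖x‖^2 ≤ (‖x‖⁻¹)^2 * qf M x * ‖x‖^2 := h3
        _ = qf M x := by field_simp
  
lemma exists_ub (M : Matrix (Fin n) (Fin n) ℂ) :
    ∃ C > 0, ∀ x : Fin n → ℂ, |qf M x| ≤ C * ‖x‖^2 := by
  by_cases hall : ∀ x : Fin n → ℂ, x = 0
  · exact ⟨1, one_pos, fun x => by simp [hall x, qf_zero]⟩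
  · push_neg at hall
    obtain ⟨x, hx0⟩ := hall
    have hne : (Metric.sphere (0 : Fin n → ℂ) 1).Nonempty := by
      refine ⟨((‖x‖⁻¹ : ℝ):ℂ) • x, ?_⟩
      have hnx : (0:ℝ) < ‖x‖ := norm_pos_iff.mpr hx0
      simp only [Metric.mem_sphere, dist_zero_right, norm_smul]
      rw [Complex.norm_real, Real.norm_eq_abs, abs_of_pos (inv_pos.mpr hnx)]
      field_simp
    obtain ⟨x₀, _, hmax⟩ := (isCompact_sphere (0 : Fin n → ℂ) 1).exists_isMaxOn hne
      ((qf_continuous M).abs.continuousOn)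
    refine ⟨|qf M x₀| + 1, by positivity, fun y => ?_⟩
    by_cases hy0 : y = 0
    · simp [hy0, qf_zero]
    · have hny : (0:ℝ) < ‖y‖ := norm_pos_iff.mpr hy0
      have hu : ((‖y‖⁻¹ : ℝ):ℂ) • y ∈ Metric.sphere (0 : Fin n → ℂ) 1 := by
        simp only [Metric.mem_sphere, dist_zero_right, norm_smul]
        rw [Complex.norm_real, Real.norm_eq_abs, abs_of_pos (inv_pos.mpr hny)]
        field_simp
      have h1 : |qf M (((‖y‖⁻¹ : ℝ):ℂ) • y)| ≤ |qf M x₀| := hmax hu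
      rw [qf_smul] at h1
      rw [abs_mul, abs_of_nonneg (by positivity : (0:ℝ) ≤ (‖y‖⁻¹)^2)] at h1
      have h2 : (‖y‖⁻¹)^2 * |qf M y| * ‖y‖^2 ≤ |qf M x₀| * ‖y‖^2 :=
        mul_le_mul_of_nonneg_right h1 (by positivity)
      have h3 : (‖y‖⁻¹)^2 * |qf M y| * ‖y‖^2 = |qf M y| := by field_simp
      rw [h3] at h2
      nlinarith [sq_nonneg ‖y‖]

lemma qf_pencil (A B : Matrix (Fin n) (Fin n) ℂ) (t : ℝ) (x : Fin n → ℂ) :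
    qf (A - (t:ℂ) • B) x = qf A x - t * qf B x := by
  rw [qf, qf, qf, Matrix.sub_mulVec, dotProduct_sub, Matrix.smul_mulVec,
    dotProduct_smul, Complex.sub_re, smul_eq_mul, Complex.re_ofReal_mul]

lemma pencil_shift (A B : Matrix (Fin n) (Fin n) ℂ) (t₀ t : ℝ) :
    A - (t:ℂ) • B = (A - (t₀:ℂ) • B) - (((t - t₀ : ℝ)):ℂ) • B := by
  push_cast
  rw [sub_smul]
  abel

lemma pd_nearby {A B : Matrix (Fin n) (Fin n) ℂ} {W : Submodule ℂ (Fin n → ℂ)}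
    (h : PdOn A W) : ∃ ε > 0, ∀ t : ℝ, |t| < ε → PdOn (A - (t:ℂ) • B) W := by
  obtain ⟨δ, hδ, hlb⟩ := exists_lb h
  obtain ⟨C, hC, hub⟩ := exists_ub B
  refine ⟨δ / C, by positivity, fun t ht x hx hx0 => ?_⟩
  rw [qf_pencil]
  have h1 : δ * ‖x‖^2 ≤ qf A x := hlb x hx
  have h2 : |qf B x| ≤ C * ‖x‖^2 := hub x
  have hnx : (0:ℝ) < ‖x‖ := norm_pos_iff.mpr hx0
  have h3 : |t * qf B x| ≤ |t| * (C * ‖x‖^2) := by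
    rw [abs_mul]
    exact mul_le_mul_of_nonneg_left h2 (abs_nonneg t)
  have h4 : |t| * (C * ‖x‖^2) < δ * ‖x‖^2 := by
    have h5 : |t| * C < δ := by
      calc |t| * C < (δ / C) * C := mul_lt_mul_of_pos_right ht hC
        _ = δ := by field_simp
    nlinarith [pow_pos hnx 2]
  have := abs_lt.mp (lt_of_le_of_lt h3 h4)
  linarith [this.1, this.2]

lemma qf_neg (M : Matrix (Fin n) (Fin n) ℂ) (x : Fin n → ℂ) : qf (-M) x = - qf M x := by
  rw [qf, qf, Matrix.neg_mulVec, dotProduct_neg, Complex.neg_re]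

lemma ndOn_iff_pdOn_neg {M : Matrix (Fin n) (Fin n) ℂ} {W : Submodule ℂ (Fin n → ℂ)} :
    NdOn M W ↔ PdOn (-M) W := by
  constructor <;> intro h x hx hx0
  · rw [qf_neg]; linarith [h x hx hx0]
  · have := h x hx hx0; rw [qf_neg] at this; linarith

lemma nd_nearby {A B : Matrix (Fin n) (Fin n) ℂ} {W : Submodule ℂ (Fin n → ℂ)}
    (h : NdOn A W) : ∃ ε > 0, ∀ t : ℝ, |t| < ε → NdOn (A - (t:ℂ) • B) W := by
  rw [ndOn_iff_pdOn_neg] at h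
  obtain ⟨ε, hε, hmain⟩ := pd_nearby (B := -B) h
  refine ⟨ε, hε, fun t ht => ?_⟩
  rw [ndOn_iff_pdOn_neg]
  have : -(A - (t:ℂ) • B) = (-A) - (t:ℂ) • (-B) := by
    rw [smul_neg]; abel
  rw [this]
  exact hmain t ht

lemma nd_large {A B : Matrix (Fin n) (Fin n) ℂ} {W : Submodule ℂ (Fin n → ℂ)}
    (h : PdOn B W) : ∃ T : ℝ, ∀ t : ℝ, T < t → NdOn (A - (t:ℂ) • B) W := by
  obtain ⟨δ, hδ, hlb⟩ := exists_lb h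
  obtain ⟨C, hC, hub⟩ := exists_ub A
  refine ⟨C / δ, fun t ht x hx hx0 => ?_⟩
  rw [qf_pencil]
  have h1 : δ * ‖x‖^2 ≤ qf B x := hlb x hx
  have h2 := (abs_le.mp (hub x)).2
  have hnx : (0:ℝ) < ‖x‖ := norm_pos_iff.mpr hx0
  have ht0 : 0 < t := lt_trans (div_pos hC hδ) ht
  have h4 : C < t * δ := (div_lt_iff₀ hδ).mp ht
  have h5 : C * ‖x‖^2 < t * (δ * ‖x‖^2) := by nlinarith [pow_pos hnx 2]
  have h6 : t * (δ * ‖x‖^2) ≤ t * qf B x := mul_le_mul_of_nonneg_left h1 ht0.le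
  linarith

lemma hermitian_pencil {A B : Matrix (Fin n) (Fin n) ℂ} (hA : A.IsHermitian)
    (hB : B.IsHermitian) (t : ℝ) : (A - (t:ℂ) • B).IsHermitian := by
  rw [Matrix.IsHermitian, Matrix.conjTranspose_sub, Matrix.conjTranspose_smul, hA.eq, hB.eq,
    Complex.star_def, Complex.conj_ofReal]

lemma local_control {A B : Matrix (Fin n) (Fin n) ℂ} (hA : A.IsHermitian) (hB : B.IsHermitian)
    (t₀ : ℝ) :
    ∃ ε > 0, ∀ t : ℝ, |t - t₀| < ε →
      nPos (hermitian_pencil hA hB t₀) ≤ nPos (hermitian_pencil hA hB t) ∧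
      nNeg (hermitian_pencil hA hB t₀) ≤ nNeg (hermitian_pencil hA hB t) := by
  obtain ⟨Wp, hWpdim, hWppd⟩ := exists_pd_subspace (hermitian_pencil hA hB t₀)
  obtain ⟨Wm, hWmdim, hWmnd⟩ := exists_nd_subspace (hermitian_pencil hA hB t₀)
  obtain ⟨ε₁, hε₁, hp⟩ := pd_nearby (B := B) hWppd
  obtain ⟨ε₂, hε₂, hm⟩ := nd_nearby (B := B) hWmnd
  refine ⟨min ε₁ ε₂, lt_min hε₁ hε₂, fun t ht => ?_⟩
  have hts : A - (t:ℂ) • B = (A - (t₀:ℂ) • B) - (((t - t₀ : ℝ)):ℂ) • B := pencil_shift A B t₀ t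
  constructor
  · rw [← hWpdim]
    apply finrank_le_nPos (hermitian_pencil hA hB t)
    have := hp (t - t₀) (lt_of_lt_of_le ht (min_le_left _ _))
    rwa [← hts] at this
  · rw [← hWmdim]
    apply finrank_le_nNeg (hermitian_pencil hA hB t)
    have := hm (t - t₀) (lt_of_lt_of_le ht (min_le_right _ _))
    rwa [← hts] at this

end aux4
section aux5
variable {n : ℕ}

lemma eval_pencil (A B : Matrix (Fin n) (Fin n) ℂ) (z : ℂ) :
    (pencil A B).eval z = (A - z • B).det := by
  have h := RingHom.map_det (Polynomial.evalRingHom z)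
    (A.map Polynomial.C - (Polynomial.X : Polynomial ℂ) • B.map Polynomial.C)
  rw [Polynomial.coe_evalRingHom] at h
  rw [pencil, h, RingHom.mapMatrix_apply]
  congr 1
  refine Matrix.ext fun i j => ?_
  simp only [Matrix.map_apply, Matrix.sub_apply, Matrix.smul_apply, smul_eq_mul,
    Polynomial.coe_evalRingHom, Polynomial.eval_sub, Polynomial.eval_mul, Polynomial.eval_C,
    Polynomial.eval_X]

lemma exists_invertible_with_kernel_cols (M : Matrix (Fin n) (Fin n) ℂ) :
    ∃ (U : Matrix (Fin n) (Fin n) ℂ) (S : Finset (Fin n)),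
      IsUnit U.det ∧ S.card + M.rank = n ∧ ∀ j ∈ S, M *ᵥ (fun i => U i j) = 0 := by
  classical
  set K := LinearMap.ker M.mulVecLin with hKdef
  set g := Module.finrank ℂ ↥K with hg
  let bK := Module.finBasis ℂ ↥K
  set v : Fin g → (Fin n → ℂ) := fun i => ↑(bK i) with hv
  have hli : LinearIndependent ℂ v := by
    have := bK.linearIndependent.map' K.subtype (by simp)
    exact this
  have hli' : LinearIndepOn ℂ id (Set.range v) := hli.linearIndepOn_id
  let b := Module.Basis.extend hli'
  haveI : Fintype (hli'.extend (Set.subset_univ _)) := FiniteDimensional.fintypeBasisIndex b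
  let e := b.indexEquiv (Pi.basisFun ℂ (Fin n))
  let b' := b.reindex e
  let U := (Pi.basisFun ℂ (Fin n)).toMatrix b'
  have hUdet : IsUnit U.det := by
    letI := (Pi.basisFun ℂ (Fin n)).invertibleToMatrix b'
    exact Matrix.isUnit_det_of_invertible _
  set T : Finset (hli'.extend (Set.subset_univ _)) :=
    Finset.univ.filter (fun j => (j : Fin n → ℂ) ∈ Set.range v) with hT
  refine ⟨U, T.image e, hUdet, ?_, ?_⟩
  · have h1 : (T.image e).card = T.card := Finset.card_image_of_injective _ e.injective
    have h2 : T.card = Fintype.card {j : hli'.extend (Set.subset_univ _) // (j : Fin n → ℂ) ∈ Set.range v} :=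
      (Fintype.card_subtype _).symm
    have hsub : Set.range v ⊆ hli'.extend (Set.subset_univ _) := hli'.subset_extend _
    let eq1 : {j : hli'.extend (Set.subset_univ _) // (j : Fin n → ℂ) ∈ Set.range v} ≃ Set.range v :=
      { toFun := fun j => ⟨(j : Fin n → ℂ), j.2⟩
        invFun := fun x => ⟨⟨(x : Fin n → ℂ), hsub x.2⟩, x.2⟩
        left_inv := fun j => by ext; rfl
        right_inv := fun x => by ext; rfl }
    have h3 : Fintype.card {j : hli'.extend (Set.subset_univ _) // (j : Fin n → ℂ) ∈ Set.range v}
        = Fintype.card (Set.range v) := Fintype.card_congr eq1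
    have h4 : Fintype.card (Set.range v) = Fintype.card (Fin g) :=
      Set.card_range_of_injective hli.injective
    have h5 : M.rank + g = n := by
      rw [Matrix.rank, hg]
      have := LinearMap.finrank_range_add_finrank_ker M.mulVecLin
      rw [← hKdef] at this
      rw [this]
      simp [Module.finrank_fintype_fun_eq_card]
    rw [h1, h2, h3, h4, Fintype.card_fin]
    omega
  · intro j hj
    obtain ⟨j₀, hj₀T, rfl⟩ := Finset.mem_image.mp hj
    have hcol : (fun i => U i (e j₀)) = b' (e j₀) := by
      funext i
      show (Pi.basisFun ℂ (Fin n)).toMatrix b' i (e j₀) = _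
      rw [Module.Basis.toMatrix_apply, Pi.basisFun_repr]
    rw [hcol]
    have hb' : b' (e j₀) = b j₀ := by
      show b.reindex e (e j₀) = b j₀
      rw [Module.Basis.reindex_apply, Equiv.symm_apply_apply]
    rw [hb', Module.Basis.extend_apply_self]
    have hmem : (j₀ : Fin n → ℂ) ∈ Set.range v := (Finset.mem_filter.mp hj₀T).2
    obtain ⟨i₀, hi₀⟩ := hmem
    have hK : (j₀ : Fin n → ℂ) ∈ K := by
      rw [← hi₀, hv]
      exact (bK i₀).2
    exact LinearMap.mem_ker.mp hK

lemma pow_card_dvd_det {R : Type*} [CommRing R] (d : R) (S : Finset (Fin n)) :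
    ∀ (N v : Matrix (Fin n) (Fin n) R), (∀ j ∈ S, ∀ i, N i j = d * v i j) →
      d ^ S.card ∣ N.det := by
  classical
  induction S using Finset.induction_on with
  | empty => intro N v h; simp
  | @insert a S ha ih =>
    intro N v h
    have hcol : N = (N.updateCol a fun i => d * v i a) := by
      rw [show (fun i => d * v i a) = fun i => N i a from
        funext fun i => (h a (Finset.mem_insert_self a S) i).symm, Matrix.updateCol_eq_self]
    have hdet : N.det = d * (N.updateCol a fun i => v i a).det := by
      conv_lhs => rw [hcol]
      exact Matrix.det_updateCol_smul N a d _
    rw [Finset.card_insert_of_notMem ha, pow_succ, hdet, mul_comm (d ^ S.card) d]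
    refine mul_dvd_mul_left d (ih _ v fun j hj i => ?_)
    have hne : j ≠ a := fun hja => ha (hja ▸ hj)
    rw [Matrix.updateCol_apply, if_neg hne]
    exact h j (Finset.mem_insert_of_mem hj) i

lemma pow_dvd_det_sub_smul (M B : Matrix (Fin n) (Fin n) ℂ) (d : Polynomial ℂ) :
    d ^ (n - M.rank) ∣ (M.map Polynomial.C - d • B.map Polynomial.C).det := by
  classical
  obtain ⟨U, S, hUdet, hScard, hScols⟩ := exists_invertible_with_kernel_cols M
  set P : Matrix (Fin n) (Fin n) (Polynomial ℂ) := M.map Polynomial.C - d • B.map Polynomial.C with hP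
  set N : Matrix (Fin n) (Fin n) (Polynomial ℂ) := P * U.map Polynomial.C with hN
  have hNsplit : N = (M * U).map Polynomial.C - d • ((B * U).map Polynomial.C) := by
    rw [hN, hP, Matrix.sub_mul, Matrix.smul_mul]
    rw [← Matrix.map_mul, ← Matrix.map_mul]
  have hcols : ∀ j ∈ S, ∀ i, N i j = d * (-(((B * U).map Polynomial.C) i j)) := by
    intro j hj i
    rw [hNsplit]
    have hMU : (M * U) i j = 0 := by
      have := congrFun (hScols j hj) i
      rw [Matrix.mulVec, dotProduct] at this
      rw [Matrix.mul_apply]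
      simpa using this
    simp only [Matrix.sub_apply, Matrix.map_apply, hMU, Matrix.smul_apply, smul_eq_mul]
    rw [map_zero]
    ring
  have hdvd : d ^ S.card ∣ N.det := pow_card_dvd_det d S N _ hcols
  have hNdet : N.det = P.det * Polynomial.C U.det := by
    rw [hN, Matrix.det_mul]
    congr 1
    exact (RingHom.map_det (Polynomial.C : ℂ →+* Polynomial ℂ) U).symm
  rw [hNdet] at hdvd
  have hcard : n - M.rank = S.card := by omega
  rw [hcard]
  exact (IsUnit.dvd_mul_right (hUdet.map Polynomial.C)).mp hdvd

lemma nZero_le_rootMultiplicity {A B : Matrix (Fin n) (Fin n) ℂ} (hA : A.IsHermitian)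
    (hB : B.IsHermitian) (hreg : pencil A B ≠ 0) (t₀ : ℝ) :
    nZero (hermitian_pencil hA hB t₀) ≤ (pencil A B).rootMultiplicity ((t₀:ℝ):ℂ) := by
  have hpencil : pencil A B = ((A - ((t₀:ℝ):ℂ) • B).map Polynomial.C
      - (Polynomial.X - Polynomial.C ((t₀:ℝ):ℂ)) • B.map Polynomial.C).det := by
    rw [pencil]
    congr 1
    refine Matrix.ext fun i j => ?_
    simp only [Matrix.sub_apply, Matrix.map_apply, Matrix.smul_apply, smul_eq_mul, map_sub,
      _root_.map_mul]
    ring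
  have hdvd : (Polynomial.X - Polynomial.C ((t₀:ℝ):ℂ)) ^ (n - (A - ((t₀:ℝ):ℂ) • B).rank)
      ∣ pencil A B := by
    rw [hpencil]
    exact pow_dvd_det_sub_smul _ B _
  have hle : nZero (hermitian_pencil hA hB t₀) ≤ n - (A - ((t₀:ℝ):ℂ) • B).rank := by
    have h := nZero_add_rank (hermitian_pencil hA hB t₀)
    omega
  rw [Polynomial.le_rootMultiplicity_iff hreg]
  exact dvd_trans (pow_dvd_pow _ hle) hdvd

end aux5
section aux6
variable {n : ℕ} {A B : Matrix (Fin n) (Fin n) ℂ}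

lemma nonroot_sum (hA : A.IsHermitian) (hB : B.IsHermitian) {t : ℝ}
    (h : (pencil A B).eval ((t:ℝ):ℂ) ≠ 0) :
    nPos (hermitian_pencil hA hB t) + nNeg (hermitian_pencil hA hB t) = n := by
  apply nPos_add_nNeg_of_det
  rw [← eval_pencil]
  exact h

lemma local_eq (hA : A.IsHermitian) (hB : B.IsHermitian) (t₀ : ℝ)
    (h : (pencil A B).eval ((t₀:ℝ):ℂ) ≠ 0) :
    ∃ ε > 0, ∀ t : ℝ, |t - t₀| < ε →
      nPos (hermitian_pencil hA hB t) = nPos (hermitian_pencil hA hB t₀) := by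
  obtain ⟨ε, hε, hc⟩ := local_control hA hB t₀
  refine ⟨ε, hε, fun t ht => ?_⟩
  have h1 := (hc t ht).1
  have h2 := (hc t ht).2
  have h3 := nonroot_sum hA hB h
  have h4 := nPos_add_nNeg_add_nZero (hermitian_pencil hA hB t)
  omega

lemma local_jump (hA : A.IsHermitian) (hB : B.IsHermitian) (t₀ : ℝ) :
    ∃ ε > 0, ∀ t : ℝ, |t - t₀| < ε →
      nPos (hermitian_pencil hA hB t₀) ≤ nPos (hermitian_pencil hA hB t) ∧
      nPos (hermitian_pencil hA hB t) ≤ nPos (hermitian_pencil hA hB t₀)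
        + nZero (hermitian_pencil hA hB t₀) := by
  obtain ⟨ε, hε, hc⟩ := local_control hA hB t₀
  refine ⟨ε, hε, fun t ht => ⟨(hc t ht).1, ?_⟩⟩
  have h2 := (hc t ht).2
  have h4 := nPos_add_nNeg_add_nZero (hermitian_pencil hA hB t)
  have h5 := nPos_add_nNeg_add_nZero (hermitian_pencil hA hB t₀)
  omega

lemma interval_const (hA : A.IsHermitian) (hB : B.IsHermitian) {t₁ t₂ : ℝ} (h12 : t₁ ≤ t₂)
    (hfree : ∀ t ∈ Set.Icc t₁ t₂, (pencil A B).eval ((t:ℝ):ℂ) ≠ 0) :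
    nPos (hermitian_pencil hA hB t₁) = nPos (hermitian_pencil hA hB t₂) := by
  haveI : PreconnectedSpace (Set.Icc t₁ t₂) := Subtype.preconnectedSpace isPreconnected_Icc
  set f : (Set.Icc t₁ t₂) → ℕ := fun s => nPos (hermitian_pencil hA hB s.1) with hf
  have hlc : IsLocallyConstant f := by
    rw [IsLocallyConstant.iff_exists_open]
    rintro ⟨x, hx⟩
    obtain ⟨ε, hε, hconst⟩ := local_eq hA hB x (hfree x hx)
    refine ⟨Subtype.val ⁻¹' Metric.ball x ε, Metric.isOpen_ball.preimage continuous_subtype_val,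
      by simp [Metric.mem_ball, hε], ?_⟩
    rintro ⟨y, hy⟩ hball
    have hyx : |y - x| < ε := by
      simpa [Metric.mem_ball, Real.dist_eq] using hball
    exact hconst y hyx
  exact hlc.apply_eq_of_preconnectedSpace ⟨t₁, Set.left_mem_Icc.mpr h12⟩
    ⟨t₂, Set.right_mem_Icc.mpr h12⟩

lemma main_ind (hA : A.IsHermitian) (hB : B.IsHermitian) (hreg : pencil A B ≠ 0) :
    ∀ (c : ℕ) (t₁ t₂ : ℝ), t₁ ≤ t₂ →
      (pencil A B).eval ((t₁:ℝ):ℂ) ≠ 0 → (pencil A B).eval ((t₂:ℝ):ℂ) ≠ 0 →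
      ((pencil A B).roots.filter (fun z => z.im = 0 ∧ t₁ < z.re ∧ z.re < t₂)).card ≤ c →
      nPos (hermitian_pencil hA hB t₁) ≤ nPos (hermitian_pencil hA hB t₂) +
        ((pencil A B).roots.filter (fun z => z.im = 0 ∧ t₁ < z.re ∧ z.re < t₂)).card := by
  intro c
  induction c using Nat.strong_induction_on with
  | _ c ih =>
  intro t₁ t₂ h12 h1 h2 hcard
  by_cases hfree : ∀ t ∈ Set.Icc t₁ t₂, (pencil A B).eval ((t:ℝ):ℂ) ≠ 0
  · rw [interval_const hA hB h12 hfree]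
    exact Nat.le_add_right _ _
  · push_neg at hfree
    obtain ⟨t', ht'mem, ht'root⟩ := hfree
    have ht'1 : t₁ < t' := by
      rcases eq_or_lt_of_le ht'mem.1 with h | h
      · exact absurd (h ▸ ht'root) h1
      · exact h
    have ht'2 : t' < t₂ := by
      rcases eq_or_lt_of_le ht'mem.2 with h | h
      · exact absurd (h ▸ ht'root) h2
      · exact h
    set F : Finset ℝ := Finset.image Complex.re
      ((pencil A B).roots.toFinset.filter (fun z => z.im = 0 ∧ t₁ < z.re ∧ z.re < t₂)) with hF
    have hmemF : ∀ s : ℝ, s ∈ F ↔ ((s:ℂ) ∈ (pencil A B).roots ∧ t₁ < s ∧ s < t₂) := by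
      intro s
      constructor
      · intro hs
        obtain ⟨z, hz, hzre⟩ := Finset.mem_image.mp hs
        obtain ⟨hz1, hz2⟩ := Finset.mem_filter.mp hz
        have hzeq : z = ((s:ℝ):ℂ) := by
          apply Complex.ext
          · simp [hzre]
          · simpa using hz2.1
        refine ⟨hzeq ▸ (Multiset.mem_toFinset.mp hz1), ?_, ?_⟩
        · rw [← hzre]; exact hz2.2.1
        · rw [← hzre]; exact hz2.2.2
      · rintro ⟨hs1, hs2, hs3⟩
        apply Finset.mem_image.mpr
        refine ⟨((s:ℝ):ℂ), Finset.mem_filter.mpr ⟨Multiset.mem_toFinset.mpr hs1, ?_⟩, by simp⟩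
        simp [hs2, hs3]
    have hFne : F.Nonempty := by
      refine ⟨t', (hmemF t').mpr ⟨?_, ht'1, ht'2⟩⟩
      exact Polynomial.mem_roots'.mpr ⟨hreg, ht'root⟩
    set r := F.min' hFne with hr
    obtain ⟨hr_root, hr1, hr2⟩ := (hmemF r).mp (F.min'_mem hFne)
    have hrmin : ∀ s ∈ F, r ≤ s := fun s hs => F.min'_le s hs
    have hnoroot_left : ∀ s : ℝ, t₁ < s → s < r → (pencil A B).eval ((s:ℝ):ℂ) ≠ 0 := by
      intro s hs1 hs2 hroot
      have : s ∈ F := (hmemF s).mpr ⟨Polynomial.mem_roots'.mpr ⟨hreg, hroot⟩, hs1, lt_trans hs2 hr2⟩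
      exact absurd (hrmin s this) (not_le.mpr hs2)
    obtain ⟨ε, hε, hjump⟩ := local_jump hA hB r
    -- left point a
    set εa := min (ε/2) ((r - t₁)/2) with hεa
    have hεapos : 0 < εa := lt_min (by linarith) (by linarith)
    set a := max t₁ (r - εa) with ha
    have ha1 : t₁ ≤ a := le_max_left _ _
    have ha2 : a < r := max_lt hr1 (by linarith)
    have ha3 : |a - r| < ε := by
      rw [abs_sub_lt_iff]
      have : r - εa ≤ a := le_max_right _ _
      constructor <;> [linarith; (have : εa ≤ ε/2 := min_le_left _ _; linarith)]
    have ha_nonroot : (pencil A B).eval ((a:ℝ):ℂ) ≠ 0 := by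
      rcases eq_or_lt_of_le ha1 with h | h
      · exact h ▸ h1
      · exact hnoroot_left a h ha2
    have hconst : nPos (hermitian_pencil hA hB t₁) = nPos (hermitian_pencil hA hB a) := by
      apply interval_const hA hB ha1
      intro t ht
      rcases eq_or_lt_of_le ht.1 with h | h
      · exact h ▸ h1
      · exact hnoroot_left t h (lt_of_le_of_lt ht.2 ha2)
    -- right point b
    set G := F.filter (fun s => r < s) with hG
    set δ := min (min (ε/2) ((t₂ - r)/2)) (if hGn : G.Nonempty then (G.min' hGn - r)/2 else 1)
      with hδdef
    have hδpos : 0 < δ := by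
      apply lt_min (lt_min (by linarith) (by linarith))
      split_ifs with hGn
      · have := Finset.mem_filter.mp (G.min'_mem hGn)
        have : r < G.min' hGn := this.2
        linarith
      · norm_num
    set b := r + δ with hb
    have hb1 : r < b := by rw [hb]; linarith
    have hb2 : b < t₂ := by
      have hd2 : δ ≤ (t₂ - r)/2 := le_trans (min_le_left _ _) (min_le_right _ _)
      rw [hb]; linarith
    have hb3 : |b - r| < ε := by
      have hd1 : δ ≤ ε/2 := le_trans (min_le_left _ _) (min_le_left _ _)
      rw [hb, abs_sub_lt_iff]
      constructor <;> linarith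
    have hb_noroot : ∀ s : ℝ, r < s → s ≤ b → (pencil A B).eval ((s:ℝ):ℂ) ≠ 0 := by
      intro s hs1 hs2 hroot
      have hsF : s ∈ F := (hmemF s).mpr ⟨Polynomial.mem_roots'.mpr ⟨hreg, hroot⟩,
        lt_trans hr1 hs1, lt_of_le_of_lt hs2 hb2⟩
      have hsG : s ∈ G := Finset.mem_filter.mpr ⟨hsF, hs1⟩
      have hGn : G.Nonempty := ⟨s, hsG⟩
      have hmin' : G.min' hGn ≤ s := G.min'_le s hsG
      have hd3 : δ ≤ (G.min' hGn - r)/2 := by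
        rw [hδdef]
        refine le_trans (min_le_right _ _) ?_
        rw [dif_pos hGn]
      have hrg : r < G.min' hGn := (Finset.mem_filter.mp (G.min'_mem hGn)).2
      rw [hb] at hs2
      linarith
    have hb_nonroot : (pencil A B).eval ((b:ℝ):ℂ) ≠ 0 := hb_noroot b hb1 le_rfl
    -- multiplicities
    have hz_le_mult : nZero (hermitian_pencil hA hB r)
        ≤ (pencil A B).rootMultiplicity ((r:ℝ):ℂ) := nZero_le_rootMultiplicity hA hB hreg r
    have hmult_count : (pencil A B).roots.count ((r:ℝ):ℂ)
        = (pencil A B).rootMultiplicity ((r:ℝ):ℂ) := (pencil A B).count_roots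
    have hmult_pos : 1 ≤ (pencil A B).roots.count ((r:ℝ):ℂ) :=
      Multiset.one_le_count_iff_mem.mpr hr_root
    -- multiset accounting
    have hsplit : ((pencil A B).roots.filter (fun z => z.im = 0 ∧ b < z.re ∧ z.re < t₂)).card
        + (pencil A B).roots.count ((r:ℝ):ℂ)
        ≤ ((pencil A B).roots.filter (fun z => z.im = 0 ∧ t₁ < z.re ∧ z.re < t₂)).card := by
      rw [Multiset.count_eq_card_filter_eq]
      rw [← Multiset.card_add, Multiset.filter_add_filter]
      have hempty : ((pencil A B).roots.filter
          (fun z => (z.im = 0 ∧ b < z.re ∧ z.re < t₂) ∧ ((r:ℝ):ℂ) = z)) = 0 := by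
        rw [Multiset.filter_eq_nil]
        rintro z hz ⟨⟨him, hbre, hret⟩, hzr⟩
        rw [← hzr] at hbre
        simp only [Complex.ofReal_re] at hbre
        linarith
      rw [hempty, add_zero]
      apply Multiset.card_le_card
      apply Multiset.monotone_filter_right
      rintro z (⟨him, hbre, hret⟩ | hzr)
      · exact ⟨him, lt_trans (lt_trans hr1 hb1) hbre, hret⟩
      · rw [← hzr]
        exact ⟨Complex.ofReal_im r, by simpa using hr1, by simpa using hr2⟩
    have hcb : ((pencil A B).roots.filter (fun z => z.im = 0 ∧ b < z.re ∧ z.re < t₂)).card < c := by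
      omega
    have ihb := ih _ hcb b t₂ hb2.le hb_nonroot h2 le_rfl
    have hja := (hjump a ha3).2
    have hjb := (hjump b hb3).1
    omega
end aux6
theorem stmt3 {n : ℕ} (A B : Matrix (Fin n) (Fin n) ℂ)
    (hA : A.IsHermitian) (hB : B.IsHermitian) (hreg : pencil A B ≠ 0) :
    nPos hA + nPos hB ≤ pencilPosCount A B + n := by
  classical
  obtain ⟨WA, hWAdim, hWApd⟩ := exists_pd_subspace hA
  obtain ⟨ε₀, hε₀, hWA⟩ := pd_nearby (B := B) hWApd
  obtain ⟨WB, hWBdim, hWBpd⟩ := exists_pd_subspace hB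
  obtain ⟨T, hT⟩ := nd_large (A := A) hWBpd
  -- upper bound for real parts of roots
  set Rset : Finset ℝ := (pencil A B).roots.toFinset.image Complex.re with hRset
  set Rbound : ℝ := if h : Rset.Nonempty then Rset.max' h else 0 with hRbound
  have hRootRe : ∀ z ∈ (pencil A B).roots, z.re ≤ Rbound := by
    intro z hz
    have hmem : z.re ∈ Rset := Finset.mem_image.mpr ⟨z, Multiset.mem_toFinset.mpr hz, rfl⟩
    rw [hRbound, dif_pos ⟨z.re, hmem⟩]
    exact Finset.le_max' _ _ hmem
  set t₂ : ℝ := max T (max 0 Rbound) + 1 with ht₂def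
  have ht₂T : T < t₂ := by
    have := le_max_left T (max 0 Rbound); rw [ht₂def]; linarith
  have ht₂one : 1 ≤ t₂ := by
    have h0 : (0:ℝ) ≤ max T (max 0 Rbound) := le_trans (le_max_left 0 Rbound) (le_max_right _ _)
    rw [ht₂def]; linarith
  have ht₂R : Rbound < t₂ := by
    have := le_trans (le_max_right 0 Rbound) (le_max_right T (max 0 Rbound))
    rw [ht₂def]; linarith
  have h2 : (pencil A B).eval ((t₂:ℝ):ℂ) ≠ 0 := by
    intro h
    have hmem : ((t₂:ℝ):ℂ) ∈ (pencil A B).roots := Polynomial.mem_roots'.mpr ⟨hreg, h⟩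
    have := hRootRe _ hmem
    rw [Complex.ofReal_re] at this
    linarith
  -- lower bound: smallest positive real root
  set Fp : Finset ℝ := ((pencil A B).roots.toFinset.filter
    (fun z => z.im = 0 ∧ 0 < z.re)).image Complex.re with hFp
  set μ : ℝ := if h : Fp.Nonempty then Fp.min' h else 1 with hμ
  have hμpos : 0 < μ := by
    rw [hμ]
    split_ifs with h
    · obtain ⟨z, hz, hzre⟩ := Finset.mem_image.mp (Fp.min'_mem h)
      have := (Finset.mem_filter.mp hz).2.2
      rw [hzre] at this
      exact this
    · norm_num
  have hμmin : ∀ z ∈ (pencil A B).roots, z.im = 0 → 0 < z.re → μ ≤ z.re := by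
    intro z hz him hre
    have hmem : z.re ∈ Fp := Finset.mem_image.mpr
      ⟨z, Finset.mem_filter.mpr ⟨Multiset.mem_toFinset.mpr hz, him, hre⟩, rfl⟩
    rw [hμ, dif_pos ⟨z.re, hmem⟩]
    exact Finset.min'_le _ _ hmem
  set t₁ : ℝ := min (min (ε₀/2) (μ/2)) (1/2) with ht₁def
  have ht₁pos : 0 < t₁ := lt_min (lt_min (by linarith) (by linarith)) (by norm_num)
  have ht₁ε : t₁ < ε₀ := by
    have := le_trans (min_le_left (min (ε₀/2) (μ/2)) (1/2)) (min_le_left (ε₀/2) (μ/2))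
    linarith
  have ht₁μ : t₁ < μ := by
    have := le_trans (min_le_left (min (ε₀/2) (μ/2)) (1/2)) (min_le_right (ε₀/2) (μ/2))
    linarith
  have ht₁2 : t₁ ≤ t₂ := by
    have := min_le_right (min (ε₀/2) (μ/2)) (1/2)
    linarith
  have h1 : (pencil A B).eval ((t₁:ℝ):ℂ) ≠ 0 := by
    intro h
    have hmem : ((t₁:ℝ):ℂ) ∈ (pencil A B).roots := Polynomial.mem_roots'.mpr ⟨hreg, h⟩
    have := hμmin _ hmem (Complex.ofReal_im t₁) (by simpa using ht₁pos)
    rw [Complex.ofReal_re] at this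
    linarith
  -- endpoints control
  have hp1 : nPos hA ≤ nPos (hermitian_pencil hA hB t₁) := by
    have hpd : PdOn (A - ((t₁:ℝ):ℂ) • B) WA := hWA t₁ (by rw [abs_of_pos ht₁pos]; exact ht₁ε)
    rw [← hWAdim]
    exact finrank_le_nPos (hermitian_pencil hA hB t₁) hpd
  have hm2 : nPos hB ≤ nNeg (hermitian_pencil hA hB t₂) := by
    have hnd : NdOn (A - ((t₂:ℝ):ℂ) • B) WB := hT t₂ ht₂T
    rw [← hWBdim]
    exact finrank_le_nNeg (hermitian_pencil hA hB t₂) hnd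
  -- main induction
  have hmain := main_ind hA hB hreg
    ((pencil A B).roots.filter (fun z => z.im = 0 ∧ t₁ < z.re ∧ z.re < t₂)).card
    t₁ t₂ ht₁2 h1 h2 le_rfl
  have hcnt : ((pencil A B).roots.filter (fun z => z.im = 0 ∧ t₁ < z.re ∧ z.re < t₂)).card
      ≤ pencilPosCount A B := by
    rw [pencilPosCount]
    apply Multiset.card_le_card
    apply Multiset.monotone_filter_right
    rintro z ⟨him, hz1, hz2⟩
    exact ⟨him, lt_trans ht₁pos hz1⟩
  have hsum2 := nPos_add_nNeg_add_nZero (hermitian_pencil hA hB t₂)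
  omega
end aux
end

section
/- Let A, B be n×n Hermitian matrices with A - zB a regular pencil. Then the number of zero eigenvalues of the pencil satisfies n₀(A,B) ≥ n₀(A) − n₀(B), and the number of infinite eigenvalues satisfies n_∞(A,B) ≥ n₀(B) − n₀(A). -/
open Polynomial Matrix
open scoped ComplexOrder

/-!
A unitary congruence does not change `det (A - zB)`. Diagonalising `A` this way, every column
belonging to a zero eigenvalue of `A` is divisible by `z`, so `z ^ n₀(A)` divides the determinant. Diagonalising `B` instead, the columns
belonging to zero eigenvalues of `B` are constant, so the determinant has degree at most
`n - n₀(B)`.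
-/

namespace Matrix

variable {ι R : Type*} [Fintype ι] [DecidableEq ι] [CommRing R]

theorem pow_card_dvd_det_of_dvd_col (M : Matrix ι ι R) (a : R) (S : Finset ι)
    (h : ∀ j ∈ S, ∀ i, a ∣ M i j) : a ^ S.card ∣ M.det := by
  rw [det_apply]
  refine Finset.dvd_sum fun σ _ => ?_
  have hprod : a ^ S.card ∣ ∏ j, M (σ j) j :=
    calc a ^ S.card = ∏ _j ∈ S, a := (Finset.prod_const a).symm
      _ ∣ ∏ j ∈ S, M (σ j) j := Finset.prod_dvd_prod_of_dvd _ _ fun j hj => h j hj (σ j)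
      _ ∣ ∏ j, M (σ j) j := Finset.prod_dvd_prod_of_subset _ _ _ (Finset.subset_univ S)
  simpa only [Units.smul_def, zsmul_eq_mul] using hprod.mul_left ((Equiv.Perm.sign σ : ℤ) : R)

theorem natDegree_det_le_sum_of_col (M : Matrix ι ι R[X]) (d : ι → ℕ)
    (h : ∀ i j, (M i j).natDegree ≤ d j) : M.det.natDegree ≤ ∑ j, d j := by
  rw [det_apply]
  refine natDegree_sum_le_of_forall_le _ _ fun σ _ => ?_
  calc (Equiv.Perm.sign σ • ∏ j, M (σ j) j).natDegree
      ≤ (∏ j, M (σ j) j).natDegree := natDegree_smul_le _ _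
    _ ≤ ∑ j, (M (σ j) j).natDegree := natDegree_prod_le _ _
    _ ≤ ∑ j, d j := Finset.sum_le_sum fun j _ => h (σ j) j

end Matrix

section Pencil

variable {n : ℕ}

theorem pencil_mul_mul (A B P Q : Matrix (Fin n) (Fin n) ℂ) :
    pencil (P * A * Q) (P * B * Q) = C (P.det * Q.det) * pencil A B := by
  have hmap (M N : Matrix (Fin n) (Fin n) ℂ) : (M * N).map C = M.map C * N.map C :=
    Matrix.map_mul (f := (C : ℂ →+* ℂ[X]))
  have hdet (M : Matrix (Fin n) (Fin n) ℂ) : (M.map C).det = C M.det :=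
    ((C : ℂ →+* ℂ[X]).map_det M).symm
  have hfactor (P' A' B' Q' : Matrix (Fin n) (Fin n) ℂ[X]) :
      P' * A' * Q' - (X : ℂ[X]) • (P' * B' * Q') = P' * (A' - (X : ℂ[X]) • B') * Q' := by
    rw [Matrix.mul_sub, Matrix.sub_mul, Matrix.mul_smul, Matrix.smul_mul]
  rw [pencil, pencil, hmap, hmap, hmap, hmap, hfactor, det_mul, det_mul, hdet, hdet, C_mul]
  ring

theorem pencil_conjStarAlgAut (A B : Matrix (Fin n) (Fin n) ℂ)
    (U : unitary (Matrix (Fin n) (Fin n) ℂ)) :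
    pencil (Unitary.conjStarAlgAut ℂ _ U A) (Unitary.conjStarAlgAut ℂ _ U B) = pencil A B := by
  rw [Unitary.conjStarAlgAut_apply, Unitary.conjStarAlgAut_apply, pencil_mul_mul, ← det_mul,
    ← Unitary.coe_star, Unitary.coe_mul_star_self, det_one, C_1, one_mul]

theorem X_pow_dvd_pencil_diagonal (d : Fin n → ℂ) (B : Matrix (Fin n) (Fin n) ℂ) :
    X ^ (Finset.univ.filter fun j => d j = 0).card ∣ pencil (diagonal d) B := by
  refine pow_card_dvd_det_of_dvd_col _ _ _ fun j hj i => ?_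
  have hdiag : diagonal d i j = 0 := by
    rcases eq_or_ne i j with rfl | hij
    · exact (diagonal_apply_eq d i).trans (Finset.mem_filter.mp hj).2
    · exact diagonal_apply_ne _ hij
  simp only [Matrix.sub_apply, map_apply, Matrix.smul_apply, hdiag, map_zero, smul_eq_mul,
    zero_sub, dvd_neg]
  exact dvd_mul_right _ _

theorem natDegree_pencil_diagonal_le (A : Matrix (Fin n) (Fin n) ℂ) (d : Fin n → ℂ) :
    (pencil A (diagonal d)).natDegree ≤ (Finset.univ.filter fun j => d j ≠ 0).card := by
  rw [Finset.card_filter]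
  refine natDegree_det_le_sum_of_col _ _ fun i j => ?_
  rcases eq_or_ne i j with rfl | hij
  · split_ifs with hi
    · simp only [Matrix.sub_apply, map_apply, Matrix.smul_apply, diagonal_apply_eq, smul_eq_mul]
      compute_degree
    · simp [not_not.mp hi]
  · simp [diagonal_apply_ne _ hij]

theorem nZero_le_rootMultiplicity_pencil {A : Matrix (Fin n) (Fin n) ℂ} (hA : A.IsHermitian)
    (B : Matrix (Fin n) (Fin n) ℂ) (hreg : pencil A B ≠ 0) :
    nZero hA ≤ (pencil A B).rootMultiplicity 0 := by
  rw [le_rootMultiplicity_iff hreg, map_zero, sub_zero,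
    ← pencil_conjStarAlgAut A B (star hA.eigenvectorUnitary),
    hA.conjStarAlgAut_star_eigenvectorUnitary]
  simpa [nZero] using X_pow_dvd_pencil_diagonal (RCLike.ofReal ∘ hA.eigenvalues) _

theorem natDegree_pencil_add_nZero_le (A : Matrix (Fin n) (Fin n) ℂ)
    {B : Matrix (Fin n) (Fin n) ℂ} (hB : B.IsHermitian) :
    (pencil A B).natDegree + nZero hB ≤ n := by
  rw [← pencil_conjStarAlgAut A B (star hB.eigenvectorUnitary),
    hB.conjStarAlgAut_star_eigenvectorUnitary]
  refine (Nat.add_le_add_right (natDegree_pencil_diagonal_le _ _) _).trans_eq ?_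
  simpa [nZero] using Finset.card_filter_add_card_filter_not (s := Finset.univ)
    fun j => (RCLike.ofReal ∘ hB.eigenvalues) j ≠ (0 : ℂ)

end Pencil

theorem stmt6 {n : ℕ} (A B : Matrix (Fin n) (Fin n) ℂ)
    (hA : A.IsHermitian) (hB : B.IsHermitian) (hreg : pencil A B ≠ 0) :
    nZero hA ≤ (pencil A B).rootMultiplicity 0 + nZero hB ∧
    nZero hB ≤ (n - (pencil A B).natDegree) + nZero hA := by
  have hzero := nZero_le_rootMultiplicity_pencil hA B hreg
  have hdegree := natDegree_pencil_add_nZero_le A hB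
  omega
end

section
/- Let P(z) = Σ_{i=0}^k z^i A_i be a Hermitian matrix polynomial (all A_i Hermitian, n×n), and suppose there exist real numbers μ₁ < μ₂ < ... < μ_{k+1} such that (−1)^i P(μ_i) is positive definite for each i. Then all nk eigenvalues of P are real, counted with multiplicity; equivalently, det P(z) has nk real roots counted with multiplicity. -/
/-!
For `v ≠ 0` the real polynomial `p_v(x) = v* P(x) v` has degree at most `k` and alternates in
sign at `μ₁ < ⋯ < μ_{k+1}`, so it has `k` distinct real roots. Hence it has degree exactly `k`,
which forces `v* A_k v ≠ 0`, so `A_k` is nonsingular and `det P` has degree `nk`; and it has no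
non-real root. If `det P(z) = 0`, taking `v ≠ 0` with `P(z) v = 0` gives `p_v(z) = 0`, so `z` is real.
-/

open Polynomial Matrix
open scoped ComplexOrder

namespace Polynomial

section FinSum

variable {R : Type*} [Semiring R] {k : ℕ}

theorem natDegree_sum_fin_C_mul_X_pow_le (c : Fin (k + 1) → R) :
    (∑ i : Fin (k + 1), C (c i) * X ^ (i : ℕ)).natDegree ≤ k :=
  natDegree_sum_le_of_forall_le _ _ fun i _ => (natDegree_C_mul_X_pow_le _ _).trans i.is_le

theorem coeff_sum_fin_C_mul_X_pow (c : Fin (k + 1) → R) (j : Fin (k + 1)) :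
    (∑ i : Fin (k + 1), C (c i) * X ^ (i : ℕ)).coeff j = c j := by
  simp [finsetSum_coeff, coeff_C_mul, coeff_X_pow, Fin.val_inj]

end FinSum

theorem card_le_natDegree_of_injective_isRoot {R ι : Type*} [CommRing R] [IsDomain R]
    [Fintype ι] {p : R[X]} (hp : p ≠ 0) {r : ι → R} (hr : Function.Injective r)
    (hroot : ∀ i, p.IsRoot (r i)) : Fintype.card ι ≤ p.natDegree :=
  not_lt.mp fun h => hp (eq_zero_of_natDegree_lt_card_of_eval_eq_zero p hr hroot h)

theorem exists_isRoot_mem_Ioo_of_eval_mul_eval_neg {f : ℝ[X]} {a b : ℝ} (hab : a ≤ b)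
    (h : f.eval a * f.eval b < 0) : ∃ x ∈ Set.Ioo a b, f.IsRoot x := by
  have hf : ContinuousOn (fun x => f.eval x) (Set.Icc a b) := f.continuous.continuousOn
  rcases mul_neg_iff.mp h with ⟨ha, hb⟩ | ⟨ha, hb⟩
  · exact intermediate_value_Ioo' hab hf ⟨hb, ha⟩
  · exact intermediate_value_Ioo hab hf ⟨ha, hb⟩

section Alternating

variable {k : ℕ} {f : ℝ[X]} {μ : Fin (k + 1) → ℝ}

theorem ne_zero_of_alternating (hsign : ∀ i : Fin (k + 1), 0 < (-1) ^ (i : ℕ) * f.eval (μ i)) :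
    f ≠ 0 := by
  rintro rfl
  simpa using hsign 0

theorem exists_strictMono_isRoot_of_alternating (hμ : StrictMono μ)
    (hsign : ∀ i : Fin (k + 1), 0 < (-1) ^ (i : ℕ) * f.eval (μ i)) :
    ∃ r : Fin k → ℝ, StrictMono r ∧ ∀ i, f.IsRoot (r i) := by
  have hroot (i : Fin k) : ∃ x ∈ Set.Ioo (μ i.castSucc) (μ i.succ), f.IsRoot x := by
    refine exists_isRoot_mem_Ioo_of_eval_mul_eval_neg (hμ i.castSucc_lt_succ).le ?_
    have hpos := mul_pos (hsign i.castSucc) (hsign i.succ)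
    simp only [Fin.val_castSucc, Fin.val_succ, pow_succ] at hpos
    have hsq : ((-1 : ℝ) ^ (i : ℕ)) ^ 2 = 1 := by rw [← pow_mul, pow_mul', neg_one_sq, one_pow]
    have hflip : (-1) ^ (i : ℕ) * f.eval (μ i.castSucc) * ((-1) ^ (i : ℕ) * -1 * f.eval (μ i.succ))
        = -(f.eval (μ i.castSucc) * f.eval (μ i.succ)) := by
      linear_combination (-(f.eval (μ i.castSucc) * f.eval (μ i.succ))) * hsq
    linarith
  choose r hr hrf using hroot
  refine ⟨r, fun i j hij => ?_, hrf⟩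
  calc r i < μ i.succ := (hr i).2
    _ ≤ μ j.castSucc := hμ.monotone (Fin.succ_le_castSucc_iff.mpr hij)
    _ < r j := (hr j).1

theorem natDegree_eq_of_alternating (hμ : StrictMono μ) (hdeg : f.natDegree ≤ k)
    (hsign : ∀ i : Fin (k + 1), 0 < (-1) ^ (i : ℕ) * f.eval (μ i)) : f.natDegree = k := by
  obtain ⟨r, hr, hrf⟩ := exists_strictMono_isRoot_of_alternating hμ hsign
  refine hdeg.antisymm ?_
  simpa using card_le_natDegree_of_injective_isRoot (ne_zero_of_alternating hsign) hr.injective hrf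

theorem im_eq_zero_of_isRoot_map_of_alternating (hμ : StrictMono μ) (hdeg : f.natDegree ≤ k)
    (hsign : ∀ i : Fin (k + 1), 0 < (-1) ^ (i : ℕ) * f.eval (μ i)) {z : ℂ}
    (hz : (f.map (algebraMap ℝ ℂ)).IsRoot z) : z.im = 0 := by
  by_contra hzim
  obtain ⟨r, hr, hrf⟩ := exists_strictMono_isRoot_of_alternating hμ hsign
  have hinj : Function.Injective (Fin.cons z fun i => (r i : ℂ) : Fin (k + 1) → ℂ) := by
    refine Fin.cons_injective_iff.mpr ⟨?_, Complex.ofReal_injective.comp hr.injective⟩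
    rintro ⟨i, hi⟩
    exact hzim (by simp [← hi])
  have hroots : ∀ i, (f.map (algebraMap ℝ ℂ)).IsRoot
      ((Fin.cons z fun i => (r i : ℂ) : Fin (k + 1) → ℂ) i) := by
    refine Fin.cases hz fun i => ?_
    simpa using (hrf i).map (f := algebraMap ℝ ℂ)
  have := card_le_natDegree_of_injective_isRoot
    (map_ne_zero (ne_zero_of_alternating hsign)) hinj hroots
  simp only [Fintype.card_fin, natDegree_map] at this
  omega

end Alternating

end Polynomial

namespace Matrix

variable {ι R : Type*} [Fintype ι] [DecidableEq ι] [CommRing R]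

theorem natDegree_det_le_of_natDegree_le {M : Matrix ι ι R[X]} {k : ℕ}
    (h : ∀ i j, (M i j).natDegree ≤ k) : M.det.natDegree ≤ Fintype.card ι * k := by
  rw [det_apply']
  refine natDegree_sum_le_of_forall_le _ _ fun σ _ => natDegree_mul_le.trans ?_
  rw [natDegree_intCast, zero_add]
  refine (natDegree_prod_le _ _).trans ?_
  simpa using Finset.sum_le_sum fun i (_ : i ∈ Finset.univ) => h (σ i) i

theorem coeff_det_of_natDegree_le {M : Matrix ι ι R[X]} {k : ℕ}
    (h : ∀ i j, (M i j).natDegree ≤ k) :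
    M.det.coeff (Fintype.card ι * k) = (M.map fun p => p.coeff k).det := by
  rw [det_apply', finsetSum_coeff, det_apply']
  refine Finset.sum_congr rfl fun σ _ => ?_
  rw [← C_eq_intCast, coeff_C_mul, Finset.card_univ.symm,
    coeff_prod_of_natDegree_le _ _ _ fun i _ => h (σ i) i]
  rfl

variable {k : ℕ} (A : Fin (k + 1) → Matrix ι ι R)

omit [Fintype ι] [DecidableEq ι] in
theorem sum_X_pow_smul_map_C_apply (a b : ι) :
    (∑ i : Fin (k + 1), (X : R[X]) ^ (i : ℕ) • (A i).map C) a b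
      = ∑ i : Fin (k + 1), C (A i a b) * X ^ (i : ℕ) := by
  simp only [sum_apply, smul_apply, map_apply, smul_eq_mul, mul_comm]

omit [Fintype ι] [DecidableEq ι] in
theorem natDegree_sum_X_pow_smul_map_C_apply_le (a b : ι) :
    ((∑ i : Fin (k + 1), (X : R[X]) ^ (i : ℕ) • (A i).map C) a b).natDegree ≤ k := by
  rw [sum_X_pow_smul_map_C_apply]
  exact natDegree_sum_fin_C_mul_X_pow_le _

theorem coeff_det_sum_X_pow_smul_map_C :
    (∑ i : Fin (k + 1), (X : R[X]) ^ (i : ℕ) • (A i).map C).det.coeff (Fintype.card ι * k)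
      = (A (Fin.last k)).det := by
  rw [coeff_det_of_natDegree_le (natDegree_sum_X_pow_smul_map_C_apply_le A)]
  congr 1
  ext a b
  rw [map_apply, sum_X_pow_smul_map_C_apply]
  exact coeff_sum_fin_C_mul_X_pow _ (Fin.last k)

theorem natDegree_det_sum_X_pow_smul_map_C (hA : (A (Fin.last k)).det ≠ 0) :
    (∑ i : Fin (k + 1), (X : R[X]) ^ (i : ℕ) • (A i).map C).det.natDegree
      = Fintype.card ι * k :=
  (natDegree_det_le_of_natDegree_le (natDegree_sum_X_pow_smul_map_C_apply_le A)).antisymm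
    (le_natDegree_of_ne_zero (by rwa [coeff_det_sum_X_pow_smul_map_C]))

theorem eval_det_sum_X_pow_smul_map_C (z : R) :
    (∑ i : Fin (k + 1), (X : R[X]) ^ (i : ℕ) • (A i).map C).det.eval z
      = (∑ i : Fin (k + 1), z ^ (i : ℕ) • A i).det := by
  rw [← coe_evalRingHom, RingHom.map_det]
  congr 1
  ext a b
  rw [RingHom.mapMatrix_apply, map_apply, sum_X_pow_smul_map_C_apply]
  simp only [coe_evalRingHom, eval_finsetSum, eval_mul, eval_C, eval_pow, eval_X, sum_apply,
    smul_apply, smul_eq_mul]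
  exact Finset.sum_congr rfl fun i _ => mul_comm _ _

end Matrix

section DefiniteMatrixPolynomial

variable {m : Type*} [Fintype m] {k : ℕ} {A : Fin (k + 1) → Matrix m m ℂ}

/-- `x ↦ v* P(x) v` as a real polynomial; taking real parts of the coefficients loses nothing
when the `A i` are Hermitian (`eval_map_quadFormPoly`). -/
noncomputable def quadFormPoly (A : Fin (k + 1) → Matrix m m ℂ) (v : m → ℂ) : ℝ[X] :=
  ∑ i : Fin (k + 1), C (star v ⬝ᵥ A i *ᵥ v).re * X ^ (i : ℕ)

theorem eval_map_quadFormPoly (hA : ∀ i, (A i).IsHermitian) (v : m → ℂ) (z : ℂ) :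
    ((quadFormPoly A v).map (algebraMap ℝ ℂ)).eval z
      = star v ⬝ᵥ (∑ i : Fin (k + 1), z ^ (i : ℕ) • A i) *ᵥ v := by
  simp only [quadFormPoly, Polynomial.map_sum, Polynomial.map_mul, map_C, Polynomial.map_pow,
    map_X, eval_finsetSum, eval_mul, eval_C, eval_pow, eval_X, sum_mulVec, dotProduct_sum,
    smul_mulVec, dotProduct_smul, smul_eq_mul]
  refine Finset.sum_congr rfl fun i _ => ?_
  have hreal : ((star v ⬝ᵥ A i *ᵥ v).re : ℂ) = star v ⬝ᵥ A i *ᵥ v :=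
    Complex.ext rfl (by simpa using ((hA i).im_star_dotProduct_mulVec_self v).symm)
  rw [Complex.coe_algebraMap, hreal, mul_comm]

theorem natDegree_quadFormPoly_le (v : m → ℂ) : (quadFormPoly A v).natDegree ≤ k :=
  natDegree_sum_fin_C_mul_X_pow_le _

theorem coeff_quadFormPoly_last (v : m → ℂ) :
    (quadFormPoly A v).coeff k = (star v ⬝ᵥ A (Fin.last k) *ᵥ v).re :=
  coeff_sum_fin_C_mul_X_pow _ (Fin.last k)

theorem quadFormPoly_alternating (hA : ∀ i, (A i).IsHermitian) {μ : Fin (k + 1) → ℝ}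
    (hdef : ∀ i : Fin (k + 1),
      (((-1 : ℂ) ^ (i : ℕ)) • ∑ j : Fin (k + 1), ((μ i : ℂ) ^ (j : ℕ)) • A j).PosDef)
    {v : m → ℂ} (hv : v ≠ 0) (i : Fin (k + 1)) :
    0 < (-1) ^ (i : ℕ) * (quadFormPoly A v).eval (μ i) := by
  have hpos := (hdef i).dotProduct_mulVec_pos hv
  rw [smul_mulVec, dotProduct_smul, ← eval_map_quadFormPoly hA, ← Complex.coe_algebraMap,
    eval_map_apply, smul_eq_mul] at hpos
  exact Complex.zero_lt_real.mp (by simpa using hpos)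

variable {μ : Fin (k + 1) → ℝ}

theorem star_dotProduct_mulVec_last_ne_zero (hA : ∀ i, (A i).IsHermitian) (hμ : StrictMono μ)
    (hdef : ∀ i : Fin (k + 1),
      (((-1 : ℂ) ^ (i : ℕ)) • ∑ j : Fin (k + 1), ((μ i : ℂ) ^ (j : ℕ)) • A j).PosDef)
    {v : m → ℂ} (hv : v ≠ 0) : star v ⬝ᵥ A (Fin.last k) *ᵥ v ≠ 0 := by
  have hsign := quadFormPoly_alternating hA hdef hv
  have hlead := leadingCoeff_ne_zero.mpr (ne_zero_of_alternating hsign)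
  rw [leadingCoeff, natDegree_eq_of_alternating hμ (natDegree_quadFormPoly_le v) hsign,
    coeff_quadFormPoly_last] at hlead
  exact fun h => hlead (by rw [h, Complex.zero_re])

variable [DecidableEq m]

theorem det_last_ne_zero_of_alternating_posDef (hA : ∀ i, (A i).IsHermitian)
    (hμ : StrictMono μ)
    (hdef : ∀ i : Fin (k + 1),
      (((-1 : ℂ) ^ (i : ℕ)) • ∑ j : Fin (k + 1), ((μ i : ℂ) ^ (j : ℕ)) • A j).PosDef) :
    (A (Fin.last k)).det ≠ 0 := by
  intro hdet
  obtain ⟨v, hv, hAv⟩ := exists_mulVec_eq_zero_iff.mpr hdet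
  exact star_dotProduct_mulVec_last_ne_zero hA hμ hdef hv (by rw [hAv, dotProduct_zero])

theorem im_eq_zero_of_det_eq_zero_of_alternating_posDef (hA : ∀ i, (A i).IsHermitian)
    (hμ : StrictMono μ)
    (hdef : ∀ i : Fin (k + 1),
      (((-1 : ℂ) ^ (i : ℕ)) • ∑ j : Fin (k + 1), ((μ i : ℂ) ^ (j : ℕ)) • A j).PosDef)
    {z : ℂ} (hz : (∑ i : Fin (k + 1), z ^ (i : ℕ) • A i).det = 0) : z.im = 0 := by
  obtain ⟨v, hv, hPv⟩ := exists_mulVec_eq_zero_iff.mpr hz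
  refine im_eq_zero_of_isRoot_map_of_alternating hμ (natDegree_quadFormPoly_le v)
    (quadFormPoly_alternating hA hdef hv) ?_
  rw [IsRoot, eval_map_quadFormPoly hA, hPv, dotProduct_zero]

end DefiniteMatrixPolynomial

theorem stmt13 {n k : ℕ} (A : Fin (k + 1) → Matrix (Fin n) (Fin n) ℂ)
    (hA : ∀ i, (A i).IsHermitian) (mu : Fin (k + 1) → ℝ) (hmu : StrictMono mu)
    (hdef : ∀ i : Fin (k + 1),
      (((-1 : ℂ) ^ (i : ℕ)) • ∑ j : Fin (k + 1), ((mu i : ℂ) ^ (j : ℕ)) • A j).PosDef) :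
    (∑ i : Fin (k + 1),
        ((Polynomial.X : Polynomial ℂ) ^ (i : ℕ)) • (A i).map (fun a => Polynomial.C a)).det.roots.card
      = n * k ∧
    ∀ z ∈ (∑ i : Fin (k + 1),
        ((Polynomial.X : Polynomial ℂ) ^ (i : ℕ)) • (A i).map (fun a => Polynomial.C a)).det.roots,
      z.im = 0 := by
  have hlead := det_last_ne_zero_of_alternating_posDef hA hmu hdef
  refine ⟨?_, fun z hz => ?_⟩
  · rw [IsAlgClosed.card_roots_eq_natDegree, natDegree_det_sum_X_pow_smul_map_C A hlead,
      Fintype.card_fin]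
  refine im_eq_zero_of_det_eq_zero_of_alternating_posDef hA hmu hdef ?_
  rw [← eval_det_sum_X_pow_smul_map_C, ← IsRoot]
  exact isRoot_of_mem_roots hz
end

section
/- Let F : ℝ → (n×n Hermitian matrices) be continuous. Then there exist n continuous real-valued functions λ₁(t), ..., λₙ(t) such that for every t, (λ₁(t), ..., λₙ(t)) are the eigenvalues of F(t) counted with multiplicity. -/
/-!
Ordering the eigenvalues of each `F t` decreasingly gives continuous functions, because the
`k`-th largest eigenvalue is `1`-Lipschitz for the operator norm (Weyl's inequality). If
`re ⟪T x, x⟫ ≤ re ⟪S x, x⟫ + c ‖x‖²` for all `x`, the span of the `k + 1` largest eigenvectors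
of `T` and the span of the `n - k` smallest eigenvectors of `S` meet in some `x ≠ 0`, and then
`λₖ(T) ‖x‖² ≤ re ⟪T x, x⟫ ≤ re ⟪S x, x⟫ + c ‖x‖² ≤ (λₖ(S) + c) ‖x‖²`.
-/

open Polynomial Matrix
open scoped ComplexOrder

open Module RCLike
open scoped InnerProductSpace

theorem Submodule.inf_ne_bot_of_finrank_lt_add {K V : Type*} [DivisionRing K] [AddCommGroup V]
    [Module K V] [FiniteDimensional K V] {s t : Submodule K V}
    (h : finrank K V < finrank K s + finrank K t) : s ⊓ t ≠ ⊥ := by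
  intro hst
  have hsum := Submodule.finrank_sup_add_finrank_inf_eq s t
  rw [hst, finrank_bot] at hsum
  have := (s ⊔ t).finrank_le
  omega

theorem LinearIndependent.finrank_span_image {ι R M : Type*} [Ring R] [StrongRankCondition R]
    [Nontrivial R] [AddCommGroup M] [Module R M] {v : ι → M} (hv : LinearIndependent R v)
    (s : Finset ι) : finrank R (Submodule.span R (v '' s)) = s.card := by
  rw [Set.image_eq_range]
  exact (finrank_span_eq_card (hv.comp _ Subtype.val_injective)).trans (Fintype.card_coe s)

theorem ContinuousLinearMap.re_inner_apply_self_le_add {𝕜 E : Type*} [RCLike 𝕜]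
    [NormedAddCommGroup E] [InnerProductSpace 𝕜 E] (T S : E →L[𝕜] E) (x : E) :
    re ⟪T x, x⟫_𝕜 ≤ re ⟪S x, x⟫_𝕜 + ‖T - S‖ * ‖x‖ ^ 2 := by
  have hdiff : re ⟪(T - S) x, x⟫_𝕜 = re ⟪T x, x⟫_𝕜 - re ⟪S x, x⟫_𝕜 := by
    rw [_root_.sub_apply, inner_sub_left, map_sub]
  have hle : re ⟪(T - S) x, x⟫_𝕜 ≤ ‖T - S‖ * ‖x‖ ^ 2 :=
    calc re ⟪(T - S) x, x⟫_𝕜 ≤ ‖(T - S) x‖ * ‖x‖ := re_inner_le_norm _ _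
      _ ≤ ‖T - S‖ * ‖x‖ * ‖x‖ := by gcongr; exact le_opNorm _ _
      _ = ‖T - S‖ * ‖x‖ ^ 2 := by ring
  linarith

theorem continuous_of_dist_le_dist {X Y Z : Type*} [TopologicalSpace X] [PseudoMetricSpace Y]
    [PseudoMetricSpace Z] {f : X → Y} {g : X → Z} (hg : Continuous g)
    (h : ∀ x y, dist (f x) (f y) ≤ dist (g x) (g y)) : Continuous f := by
  refine continuous_iff_continuousAt.mpr fun x => tendsto_iff_dist_tendsto_zero.mpr ?_
  refine squeeze_zero (fun y => dist_nonneg) (fun y => h y x) ?_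
  exact tendsto_iff_dist_tendsto_zero.mp (hg.tendsto x)

namespace OrthonormalBasis

variable {ι 𝕜 E : Type*} [Fintype ι] [RCLike 𝕜] [NormedAddCommGroup E] [InnerProductSpace 𝕜 E]

theorem inner_eq_zero_of_mem_span (b : OrthonormalBasis ι 𝕜 E) {s : Set ι} {x : E}
    (hx : x ∈ Submodule.span 𝕜 (b '' s)) {i : ι} (hi : i ∉ s) : ⟪b i, x⟫_𝕜 = 0 := by
  rw [← b.coe_toBasis, Basis.mem_span_image] at hx
  rw [← b.repr_apply_apply, ← b.coe_toBasis_repr_apply]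
  exact Finsupp.notMem_support_iff.mp fun h => hi (hx h)

end OrthonormalBasis

namespace LinearMap.IsSymmetric

variable {𝕜 E : Type*} [RCLike 𝕜] [NormedAddCommGroup E] [InnerProductSpace 𝕜 E]
  [FiniteDimensional 𝕜 E] {T S : E →ₗ[𝕜] E} {n : ℕ}

theorem re_inner_apply_self_eq_sum (hT : T.IsSymmetric) (hn : finrank 𝕜 E = n) (x : E) :
    re ⟪T x, x⟫_𝕜 = ∑ i, hT.eigenvalues hn i * ‖⟪hT.eigenvectorBasis hn i, x⟫_𝕜‖ ^ 2 := by
  rw [← (hT.eigenvectorBasis hn).sum_inner_mul_inner, map_sum]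
  refine Finset.sum_congr rfl fun i _ => ?_
  rw [hT, apply_eigenvectorBasis, inner_smul_right, ← inner_conj_symm, mul_assoc, RCLike.conj_mul]
  norm_cast

theorem mul_norm_sq_le_re_inner_of_mem_span (hT : T.IsSymmetric) (hn : finrank 𝕜 E = n)
    {s : Set (Fin n)} {c : ℝ} (hc : ∀ i ∈ s, c ≤ hT.eigenvalues hn i) {x : E}
    (hx : x ∈ Submodule.span 𝕜 (hT.eigenvectorBasis hn '' s)) :
    c * ‖x‖ ^ 2 ≤ re ⟪T x, x⟫_𝕜 := by
  rw [← (hT.eigenvectorBasis hn).sum_sq_norm_inner_right, re_inner_apply_self_eq_sum,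
    Finset.mul_sum]
  refine Finset.sum_le_sum fun i _ => ?_
  by_cases hi : i ∈ s
  · gcongr; exact hc i hi
  · simp [(hT.eigenvectorBasis hn).inner_eq_zero_of_mem_span hx hi]

theorem re_inner_le_mul_norm_sq_of_mem_span (hT : T.IsSymmetric) (hn : finrank 𝕜 E = n)
    {s : Set (Fin n)} {c : ℝ} (hc : ∀ i ∈ s, hT.eigenvalues hn i ≤ c) {x : E}
    (hx : x ∈ Submodule.span 𝕜 (hT.eigenvectorBasis hn '' s)) :
    re ⟪T x, x⟫_𝕜 ≤ c * ‖x‖ ^ 2 := by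
  rw [← (hT.eigenvectorBasis hn).sum_sq_norm_inner_right, re_inner_apply_self_eq_sum,
    Finset.mul_sum]
  refine Finset.sum_le_sum fun i _ => ?_
  by_cases hi : i ∈ s
  · gcongr; exact hc i hi
  · simp [(hT.eigenvectorBasis hn).inner_eq_zero_of_mem_span hx hi]

theorem eigenvalues_le_add_of_re_inner_le (hT : T.IsSymmetric) (hS : S.IsSymmetric)
    (hn : finrank 𝕜 E = n) {c : ℝ} (h : ∀ x, re ⟪T x, x⟫_𝕜 ≤ re ⟪S x, x⟫_𝕜 + c * ‖x‖ ^ 2)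
    (k : Fin n) : hT.eigenvalues hn k ≤ hS.eigenvalues hn k + c := by
  set V := Submodule.span 𝕜 (hT.eigenvectorBasis hn '' ↑(Finset.Iic k))
  set W := Submodule.span 𝕜 (hS.eigenvectorBasis hn '' ↑(Finset.Ici k))
  have hVW : V ⊓ W ≠ ⊥ := by
    have hV : finrank 𝕜 V = k + 1 := by
      rw [(hT.eigenvectorBasis hn).orthonormal.linearIndependent.finrank_span_image,
        Fin.card_Iic]
    have hW : finrank 𝕜 W = n - k := by
      rw [(hS.eigenvectorBasis hn).orthonormal.linearIndependent.finrank_span_image,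
        Fin.card_Ici]
    apply Submodule.inf_ne_bot_of_finrank_lt_add
    omega
  obtain ⟨x, ⟨hxV, hxW⟩, hx⟩ := (Submodule.ne_bot_iff _).mp hVW
  have hTx : hT.eigenvalues hn k * ‖x‖ ^ 2 ≤ re ⟪T x, x⟫_𝕜 :=
    hT.mul_norm_sq_le_re_inner_of_mem_span hn
      (fun i hi => hT.eigenvalues_antitone hn (Finset.mem_Iic.mp hi)) hxV
  have hSx : re ⟪S x, x⟫_𝕜 ≤ hS.eigenvalues hn k * ‖x‖ ^ 2 :=
    hS.re_inner_le_mul_norm_sq_of_mem_span hn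
      (fun i hi => hS.eigenvalues_antitone hn (Finset.mem_Ici.mp hi)) hxW
  have hx2 : 0 < ‖x‖ ^ 2 := by positivity
  nlinarith [h x]

end LinearMap.IsSymmetric

theorem LinearMap.IsSymmetric.abs_eigenvalues_sub_le {𝕜 E : Type*} [RCLike 𝕜]
    [NormedAddCommGroup E] [InnerProductSpace 𝕜 E] [FiniteDimensional 𝕜 E] {T S : E →L[𝕜] E}
    (hT : (T : E →ₗ[𝕜] E).IsSymmetric) (hS : (S : E →ₗ[𝕜] E).IsSymmetric) {n : ℕ}
    (hn : finrank 𝕜 E = n) (k : Fin n) :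
    |hT.eigenvalues hn k - hS.eigenvalues hn k| ≤ ‖T - S‖ := by
  have hTS := hT.eigenvalues_le_add_of_re_inner_le hS hn (T.re_inner_apply_self_le_add S) k
  have hST := hS.eigenvalues_le_add_of_re_inner_le hT hn (S.re_inner_apply_self_le_add T) k
  rw [norm_sub_rev] at hST
  exact abs_sub_le_iff.mpr ⟨by linarith, by linarith⟩

namespace Matrix.IsHermitian

variable {𝕜 ι : Type*} [RCLike 𝕜] [Fintype ι] [DecidableEq ι]

theorem abs_eigenvalues₀_sub_le {A B : Matrix ι ι 𝕜} (hA : A.IsHermitian) (hB : B.IsHermitian)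
    (k : Fin (Fintype.card ι)) :
    |hA.eigenvalues₀ k - hB.eigenvalues₀ k| ≤ ‖toEuclideanCLM (𝕜 := 𝕜) (A - B)‖ := by
  rw [map_sub]
  exact LinearMap.IsSymmetric.abs_eigenvalues_sub_le (T := toEuclideanCLM (𝕜 := 𝕜) A)
    (S := toEuclideanCLM (𝕜 := 𝕜) B) (isSymmetric_toEuclideanLin_iff.mpr hA)
    (isSymmetric_toEuclideanLin_iff.mpr hB) finrank_euclideanSpace k

theorem continuous_eigenvalues₀ {X : Type*} [TopologicalSpace X] {F : X → Matrix ι ι 𝕜}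
    (hF : Continuous F) (hH : ∀ t, (F t).IsHermitian) (k : Fin (Fintype.card ι)) :
    Continuous fun t => (hH t).eigenvalues₀ k := by
  have hcont : Continuous fun t => toEuclideanCLM (𝕜 := 𝕜) (F t) :=
    (LinearMap.continuous_of_finiteDimensional
      (toEuclideanCLM (n := ι) (𝕜 := 𝕜)).toAlgEquiv.toLinearMap).comp hF
  refine continuous_of_dist_le_dist hcont fun s t => ?_
  rw [Real.dist_eq, dist_eq_norm, ← map_sub]
  exact abs_eigenvalues₀_sub_le (hH s) (hH t) k

end Matrix.IsHermitian

theorem stmt19 {n : ℕ} (F : ℝ → Matrix (Fin n) (Fin n) ℂ)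
    (hcont : Continuous F) (hH : ∀ t, (F t).IsHermitian) :
    ∃ lam : Fin n → ℝ → ℝ, (∀ i, Continuous (lam i)) ∧
      ∀ t, ∃ σ : Equiv.Perm (Fin n), ∀ i, lam i t = (hH t).eigenvalues (σ i) := by
  let e : Fin n ≃ Fin (Fintype.card (Fin n)) := finCongr (Fintype.card_fin n).symm
  refine ⟨fun i t => (hH t).eigenvalues₀ (e i),
    fun i => IsHermitian.continuous_eigenvalues₀ hcont hH (e i), fun t => ?_⟩
  -- `eigenvalues` is `eigenvalues₀` reindexed along `Fintype.equivOfCardEq`.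
  refine ⟨e.trans (Fintype.equivOfCardEq (Fintype.card_fin _)), fun i => ?_⟩
  simp [IsHermitian.eigenvalues]
end
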